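/- arXiv:hep-th/0607078 — 3 statements merged into one kernel-verified Lean document; each statement's English description precedes it below -/
import Mathlib

section
/- Suppose Θ is a real skew-symmetric n×n matrix satisfying the Diophantine condition: there are C > 0, β ≥ 0 with inf_{k∈ℤⁿ}|Θq − 2πk| ≥ C/|q|^{1+β} for all q in 𝒦^{inf} (the set of q with Θq ∉ 2πℤⁿ after reduction). Then for Schwartz sequences l_q, r_q, the function t ↦ (4πt)^{n/2} ∑_{q,k∈ℤⁿ} l_q r_{−q} (4πt)^{−n/2} e^{−|Θq−2πk|²/4t} equals ∑_{q∈𝒵} l_q r_{−q} + O(t^N) as t → 0⁺ for every N > 0, where 𝒵 := {q ∈ ℤⁿ : Θq ∈ 2πℤⁿ}. -/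
/-!
Write the inner sum as the periodised heat kernel `θ_t(y) = ∑_k exp(-|y - 2πk|²/4t)` at
`y = Θq`. For `t ≤ 1` and `u ≥ D²` one has `exp(-u/4t) ≤ exp(-D²/8t) · exp(-u/8)`, and
`∑_k exp(-|y - 2πk|²/8)` is bounded uniformly in `y`; hence `|θ_t(Θq) - 1| = O(e^{-π²/2t})`
for `q ∈ 𝒵` (all terms but one have `|Θq - 2πk| ≥ 2π`) and, by the Diophantine condition,
`θ_t(Θq) = O(exp(-C²/(8t|q|^{2+2β})))` for `q ∉ 𝒵`. The latter is `O(t^N)` as long as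
`|q|^{2+2β} √t ≤ 1` and is otherwise at most `1 ≤ |q|^M t^N`; the polynomial loss `|q|^M`
is absorbed by the rapid decay of `l_q r_{-q}`.
-/

open Real Matrix Set

/-- Coercion of an integer vector to a real vector. -/
def intVec {n : ℕ} (k : Fin n → ℤ) : Fin n → ℝ := fun i => (k i : ℝ)

/-- Squared Euclidean norm on `ℝⁿ`. -/
noncomputable def sqnorm {n : ℕ} (x : Fin n → ℝ) : ℝ := ∑ i, x i ^ 2

/-- A sequence indexed by `ℤⁿ` of rapid (Schwartz) decay. -/
def RapidDecay {n : ℕ} (a : (Fin n → ℤ) → ℂ) : Prop :=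
  ∀ m : ℕ, ∃ c : ℝ, ∀ q : Fin n → ℤ, ‖a q‖ * (1 + Real.sqrt (sqnorm (intVec q))) ^ m ≤ c

/-- The set `𝒵 = {q ∈ ℤⁿ : Θq ∈ 2πℤⁿ}`. -/
def latticeZ {n : ℕ} (Θ : Matrix (Fin n) (Fin n) ℝ) : Set (Fin n → ℤ) :=
  {q | ∃ m : Fin n → ℤ, Θ.mulVec (intVec q) = (2 * Real.pi) • intVec m}

section
variable {n : ℕ}

lemma sqnorm_nonneg (x : Fin n → ℝ) : 0 ≤ sqnorm x :=
  Finset.sum_nonneg fun _ _ => sq_nonneg _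

lemma sqnorm_smul (c : ℝ) (x : Fin n → ℝ) : sqnorm (c • x) = c ^ 2 * sqnorm x := by
  simp [sqnorm, Finset.mul_sum, mul_pow]

lemma sqnorm_sub_le (x y : Fin n → ℝ) : sqnorm (x - y) ≤ 2 * (sqnorm x + sqnorm y) := by
  simp only [sqnorm, ← Finset.sum_add_distrib, Finset.mul_sum, Pi.sub_apply]
  exact Finset.sum_le_sum fun i _ => by nlinarith [sq_nonneg (x i + y i)]

lemma sq_apply_le_sqnorm (x : Fin n → ℝ) (i : Fin n) : x i ^ 2 ≤ sqnorm x :=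
  Finset.single_le_sum (fun j _ => sq_nonneg (x j)) (Finset.mem_univ i)

lemma one_le_sqnorm_intVec {q : Fin n → ℤ} (hq : q ≠ 0) : 1 ≤ sqnorm (intVec q) := by
  obtain ⟨i, hi⟩ := Function.ne_iff.mp hq
  refine le_trans ?_ (sq_apply_le_sqnorm (intVec q) i)
  show (1 : ℝ) ≤ (q i : ℝ) ^ 2
  exact_mod_cast (one_le_sq_iff_one_le_abs _).2 (Int.one_le_abs hi)

lemma zero_mem_latticeZ (Θ : Matrix (Fin n) (Fin n) ℝ) : (0 : Fin n → ℤ) ∈ latticeZ Θ :=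
  ⟨0, by
    have h : intVec (0 : Fin n → ℤ) = 0 := funext fun _ => Int.cast_zero
    simp [h]⟩

lemma summable_prod_comp_of_nonneg {α : Type*} {f : α → ℝ} (hf0 : ∀ a, 0 ≤ f a)
    (hf : Summable f) : ∀ n : ℕ, Summable (fun k : Fin n → α => ∏ i, f (k i))
  | 0 => .of_finite
  | n + 1 => by
    have h := hf.mul_of_nonneg (summable_prod_comp_of_nonneg hf0 hf n) hf0
      fun k => Finset.prod_nonneg fun i _ => hf0 _
    refine (Fin.consEquiv fun _ => α).summable_iff.1 (h.congr fun x => ?_)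
    simp [Fin.consEquiv, Fin.prod_univ_succ]

lemma summable_int_exp_neg_mul_sq {c : ℝ} (hc : 0 < c) :
    Summable (fun z : ℤ => exp (-c * (z : ℝ) ^ 2)) := by
  have hnat : Summable (fun m : ℕ => exp (-c * (m : ℝ) ^ 2)) :=
    summable_exp_nat_mul_of_ge (neg_lt_zero.2 hc) fun m => by
      exact_mod_cast Nat.le_self_pow two_ne_zero m
  exact .of_nat_of_neg hnat (by simpa using hnat)

lemma summable_int_inv_one_add_abs_sq : Summable (fun z : ℤ => ((1 + |(z : ℝ)|) ^ 2)⁻¹) := by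
  have hnat : Summable (fun m : ℕ => ((1 + |(m : ℝ)|) ^ 2)⁻¹) := by
    simpa [add_comm] using (summable_nat_add_iff 1).2 (Real.summable_nat_pow_inv.2 one_lt_two)
  exact .of_nat_of_neg hnat (by simpa using hnat)

lemma summable_exp_neg_mul_sqnorm_intVec {c : ℝ} (hc : 0 < c) :
    Summable (fun k : Fin n → ℤ => exp (-c * sqnorm (intVec k))) := by
  refine (summable_prod_comp_of_nonneg (fun _ => (exp_pos _).le)
    (summable_int_exp_neg_mul_sq hc) n).congr fun k => ?_
  simp [sqnorm, intVec, Finset.mul_sum, ← Real.exp_sum]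

lemma summable_inv_one_add_sqrt_sqnorm_pow :
    Summable (fun q : Fin n → ℤ => ((1 + √(sqnorm (intVec q))) ^ (2 * n))⁻¹) := by
  refine (summable_prod_comp_of_nonneg (fun _ => by positivity) summable_int_inv_one_add_abs_sq
    n).of_nonneg_of_le (fun _ => by positivity) fun q => ?_
  rw [pow_mul, ← Fin.prod_const, ← Finset.prod_inv_distrib]
  refine Finset.prod_le_prod (fun _ _ => by positivity) fun i _ => ?_
  gcongr
  exact Real.abs_le_sqrt (sq_apply_le_sqnorm (intVec q) i)

end

lemma exp_neg_div_sqrt_le {c t : ℝ} (hc : 0 < c) (ht : 0 < t) (m : ℕ) :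
    exp (-(c / √t)) ≤ (2 * m).factorial / c ^ (2 * m) * t ^ m := by
  have hx : 0 < c / √t := by positivity
  calc exp (-(c / √t)) = (exp (c / √t))⁻¹ := exp_neg _
    _ ≤ ((c / √t) ^ (2 * m) / (2 * m).factorial)⁻¹ :=
      inv_anti₀ (by positivity) (pow_div_factorial_le_exp _ hx.le _)
    _ = (2 * m).factorial / c ^ (2 * m) * t ^ m := by
      rw [div_pow, pow_mul √t, sq_sqrt ht.le]
      field_simp

lemma exists_exp_neg_div_sqrt_le_rpow {c : ℝ} (hc : 0 < c) (N : ℝ) :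
    ∃ K, 0 ≤ K ∧ ∀ t, 0 < t → t ≤ 1 → exp (-(c / √t)) ≤ K * t ^ N := by
  refine ⟨(2 * ⌈N⌉₊).factorial / c ^ (2 * ⌈N⌉₊), by positivity, fun t ht0 ht1 =>
    (exp_neg_div_sqrt_le hc ht0 ⌈N⌉₊).trans ?_⟩
  gcongr
  rw [← rpow_natCast]
  exact rpow_le_rpow_of_exponent_ge ht0 ht1 (Nat.le_ceil N)

lemma exp_neg_div_le_exp_neg_div_sqrt {c t : ℝ} (hc : 0 ≤ c) (ht0 : 0 < t) (ht1 : t ≤ 1) :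
    exp (-(c / t)) ≤ exp (-(c / √t)) :=
  exp_le_exp.2 <| neg_le_neg <| div_le_div_of_nonneg_left hc ht0 <|
    (Real.le_sqrt ht0.le ht0.le).2 (by nlinarith)

/-- Either `s^γ √t ≤ 1`, and then the exponent is at least `c / √t`,
or `1 ≤ (s^γ √t)^{2N} ≤ s^M t^N`. -/
lemma exp_neg_div_mul_rpow_le {c γ N K t s : ℝ} {M : ℕ} (hc : 0 ≤ c) (hN : 0 ≤ N) (ht : 0 < t)
    (hs : 1 ≤ s) (hM : 2 * γ * N ≤ M) (hK : exp (-(c / √t)) ≤ K * t ^ N) :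
    exp (-(c / (t * s ^ γ))) ≤ (K + s ^ M) * t ^ N := by
  have hsγ : 0 < s ^ γ := rpow_pos_of_pos (by linarith) γ
  have hsMt : 0 ≤ s ^ M * t ^ N := by positivity
  rw [add_mul]
  rcases le_or_gt (s ^ γ * √t) 1 with hsmall | hlarge
  · have hts : t * s ^ γ ≤ √t := by
      calc t * s ^ γ = √t * (s ^ γ * √t) := by
            rw [mul_left_comm, mul_self_sqrt ht.le, mul_comm]
        _ ≤ √t := mul_le_of_le_one_right (sqrt_nonneg _) hsmall
    have := exp_le_exp.2 <| neg_le_neg <| div_le_div_of_nonneg_left hc (by positivity) hts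
    linarith
  · have h1 : 1 ≤ s ^ M * t ^ N :=
      calc 1 ≤ (s ^ γ * √t) ^ (2 * N) := one_le_rpow hlarge.le (by positivity)
        _ = s ^ (2 * γ * N) * t ^ N := by
          rw [mul_rpow hsγ.le (sqrt_nonneg _), ← rpow_mul (by linarith), sqrt_eq_rpow,
            ← rpow_mul ht.le]
          ring_nf
        _ ≤ s ^ M * t ^ N := by
          gcongr
          rw [← rpow_natCast]
          exact rpow_le_rpow_of_exponent_le hs hM
    have := exp_le_one_iff.2 (neg_nonpos.2 (by positivity : 0 ≤ c / (t * s ^ γ)))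
    linarith [(exp_pos (-(c / √t))).le.trans hK]

section
variable {n : ℕ}

noncomputable def gaussTerm (s : ℝ) (y : Fin n → ℝ) (k : Fin n → ℤ) : ℝ :=
  exp (-(sqnorm (y - (2 * π) • intVec k) / s))

/-- The periodised heat kernel `∑_k exp(-|y - 2πk|²/4t)` on `ℝⁿ/2πℤⁿ`, without the factor
`(4πt)^{-n/2}`. -/
noncomputable def periodicHeatKernel (t : ℝ) (y : Fin n → ℝ) : ℝ :=
  ∑' k, gaussTerm (4 * t) y k

variable {s s' t D : ℝ} {y : Fin n → ℝ} {k : Fin n → ℤ}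

lemma gaussTerm_pos : 0 < gaussTerm s y k := exp_pos _

lemma gaussTerm_le_gaussTerm (hs : 0 < s) (hss' : s ≤ s') : gaussTerm s y k ≤ gaussTerm s' y k :=
  exp_le_exp.2 <| neg_le_neg <| div_le_div_of_nonneg_left (sqnorm_nonneg _) hs hss'

lemma Summable.gaussTerm_of_le (h : Summable (gaussTerm s' y)) (hs : 0 < s) (hss' : s ≤ s') :
    Summable (gaussTerm s y) :=
  h.of_nonneg_of_le (fun _ => gaussTerm_pos.le) fun _ => gaussTerm_le_gaussTerm hs hss'

lemma exists_sqnorm_sub_two_pi_smul_le (y : Fin n → ℝ) :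
    ∃ m : Fin n → ℤ, sqnorm (y - (2 * π) • intVec m) ≤ n * π ^ 2 := by
  refine ⟨fun i => round (y i / (2 * π)), ?_⟩
  calc sqnorm _ ≤ ∑ _i : Fin n, π ^ 2 := Finset.sum_le_sum fun i _ => ?_
    _ = n * π ^ 2 := by simp
  have hround := abs_sub_round (y i / (2 * π))
  have hcoord : (y - (2 * π) • intVec fun i => round (y i / (2 * π))) i
      = 2 * π * (y i / (2 * π) - round (y i / (2 * π))) := by
    simp only [intVec, Pi.sub_apply, Pi.smul_apply, smul_eq_mul]
    field_simp
  rw [hcoord, mul_pow, ← sq_abs (_ - _)]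
  calc (2 * π) ^ 2 * |y i / (2 * π) - round (y i / (2 * π))| ^ 2 ≤ (2 * π) ^ 2 * (1 / 2) ^ 2 := by
        gcongr
    _ = π ^ 2 := by ring

lemma exists_forall_tsum_gaussTerm_le (hs : 0 < s) :
    ∃ A, ∀ y : Fin n → ℝ, Summable (gaussTerm s y) ∧ ∑' k, gaussTerm s y k ≤ A := by
  set g : (Fin n → ℤ) → ℝ :=
    fun k => exp (n * π ^ 2 / s) * exp (-(2 * π ^ 2 / s) * sqnorm (intVec k))
  have hg : Summable g := (summable_exp_neg_mul_sqnorm_intVec (by positivity)).mul_left _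
  refine ⟨∑' k, g k, fun y => ?_⟩
  obtain ⟨m, hm⟩ := exists_sqnorm_sub_two_pi_smul_le y
  have hle : ∀ k, gaussTerm s y (k + m) ≤ g k := by
    intro k
    have hdiff : (y - (2 * π) • intVec m) - (y - (2 * π) • intVec (k + m))
        = (2 * π) • intVec k := by
      funext i
      simp only [Pi.sub_apply, Pi.smul_apply, intVec, smul_eq_mul, Pi.add_apply, Int.cast_add]
      ring
    have h := sqnorm_sub_le (y - (2 * π) • intVec m) (y - (2 * π) • intVec (k + m))
    rw [hdiff, sqnorm_smul] at h
    have hk : 2 * π ^ 2 * sqnorm (intVec k) - n * π ^ 2 ≤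
        sqnorm (y - (2 * π) • intVec (k + m)) := by
      nlinarith
    have hks := div_le_div_of_nonneg_right hk hs.le
    simp only [g, gaussTerm, ← exp_add, exp_le_exp]
    rw [sub_div] at hks
    linarith [show 2 * π ^ 2 / s * sqnorm (intVec k) = 2 * π ^ 2 * sqnorm (intVec k) / s by ring]
  have hshift : Summable fun k => gaussTerm s y (k + m) :=
    hg.of_nonneg_of_le (fun _ => gaussTerm_pos.le) hle
  refine ⟨(Equiv.addRight m).summable_iff.1 hshift, ?_⟩
  rw [← (Equiv.addRight m).tsum_eq]
  exact hshift.tsum_le_tsum hle hg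

lemma periodicHeatKernel_nonneg : 0 ≤ periodicHeatKernel t y :=
  tsum_nonneg fun _ => gaussTerm_pos.le

lemma gaussTerm_four_mul_le (ht0 : 0 < t) (ht1 : t ≤ 1)
    (hD : D ^ 2 ≤ sqnorm (y - (2 * π) • intVec k)) :
    gaussTerm (4 * t) y k ≤ exp (-(D ^ 2 / (8 * t))) * gaussTerm 8 y k := by
  set u := sqnorm (y - (2 * π) • intVec k)
  have h1 : D ^ 2 / (8 * t) ≤ u / (8 * t) := by gcongr
  have h2 : u / 8 ≤ u / (8 * t) :=
    div_le_div_of_nonneg_left (sqnorm_nonneg _) (by positivity) (by linarith)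
  have h3 : u / (4 * t) = u / (8 * t) + u / (8 * t) := by field_simp; ring
  rw [gaussTerm, gaussTerm, ← exp_add]
  exact exp_le_exp.2 (by linarith)

lemma periodicHeatKernel_le {A : ℝ} (ht0 : 0 < t) (ht1 : t ≤ 1) (hsum : Summable (gaussTerm 8 y))
    (hA : ∑' k, gaussTerm 8 y k ≤ A) (hD0 : 0 ≤ D)
    (hD : D ≤ ⨅ k : Fin n → ℤ, √(sqnorm (y - (2 * π) • intVec k))) :
    periodicHeatKernel t y ≤ exp (-(D ^ 2 / (8 * t))) * A := by
  have hDk : ∀ k : Fin n → ℤ, D ^ 2 ≤ sqnorm (y - (2 * π) • intVec k) := fun k =>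
    (Real.le_sqrt hD0 (sqnorm_nonneg _)).1 <|
      hD.trans (ciInf_le ⟨0, by rintro _ ⟨k, rfl⟩; exact sqrt_nonneg _⟩ k)
  grw [← hA]
  rw [periodicHeatKernel, ← tsum_mul_left]
  exact (hsum.gaussTerm_of_le (by positivity) (by linarith)).tsum_le_tsum
    (fun k => gaussTerm_four_mul_le ht0 ht1 (hDk k)) (hsum.mul_left _)

lemma abs_periodicHeatKernel_sub_one_le {A : ℝ} {m : Fin n → ℤ} (ht0 : 0 < t) (ht1 : t ≤ 1)
    (hsum : Summable (gaussTerm 8 y)) (hA : ∑' k, gaussTerm 8 y k ≤ A)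
    (hy : y = (2 * π) • intVec m) :
    |periodicHeatKernel t y - 1| ≤ exp (-(π ^ 2 / 2 / t)) * A := by
  have hm : gaussTerm (4 * t) y m = 1 := by simp [gaussTerm, hy, sqnorm]
  have hrest : ∀ k, (if k = m then 0 else gaussTerm (4 * t) y k)
      ≤ exp (-(π ^ 2 / 2 / t)) * gaussTerm 8 y k := by
    intro k
    split_ifs with hk
    · exact mul_nonneg (exp_pos _).le gaussTerm_pos.le
    have hdist : (2 * π) ^ 2 ≤ sqnorm (y - (2 * π) • intVec k) := by
      have hmk : y - (2 * π) • intVec k = (2 * π) • intVec (m - k) := by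
        funext i
        simp only [hy, Pi.sub_apply, Pi.smul_apply, intVec, smul_eq_mul, Int.cast_sub]
        ring
      rw [hmk, sqnorm_smul]
      exact le_mul_of_one_le_right (by positivity)
        (one_le_sqnorm_intVec (sub_ne_zero.2 (Ne.symm hk)))
    convert gaussTerm_four_mul_le ht0 ht1 hdist using 4
    ring
  have hrest0 : ∀ k, 0 ≤ if k = m then 0 else gaussTerm (4 * t) y k := fun k => by
    split_ifs
    exacts [le_rfl, gaussTerm_pos.le]
  rw [periodicHeatKernel,
    (hsum.gaussTerm_of_le (by positivity) (by linarith)).tsum_eq_add_tsum_ite m, hm,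
    add_sub_cancel_left, abs_of_nonneg (tsum_nonneg hrest0)]
  grw [← hA]
  rw [← tsum_mul_left]
  exact (hsum.mul_left _).of_nonneg_of_le hrest0 hrest |>.tsum_le_tsum hrest (hsum.mul_left _)

end

section
variable {n : ℕ}

lemma periodicHeatKernel_le_of_le_iInf {A C β t : ℝ} {q : Fin n → ℤ} {y : Fin n → ℝ}
    (hC : 0 < C) (hq : q ≠ 0) (ht0 : 0 < t) (ht1 : t ≤ 1) (hsum : Summable (gaussTerm 8 y))
    (hA : ∑' k, gaussTerm 8 y k ≤ A) (h : C / √(sqnorm (intVec q)) ^ ((1 : ℝ) + β) ≤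
      ⨅ k : Fin n → ℤ, √(sqnorm (y - (2 * π) • intVec k))) :
    periodicHeatKernel t y ≤
      exp (-(C ^ 2 / 8 / (t * √(sqnorm (intVec q)) ^ (2 * (1 + β))))) * A := by
  have hs : 0 < √(sqnorm (intVec q)) := by
    linarith [one_le_sqrt.2 (one_le_sqnorm_intVec hq)]
  convert periodicHeatKernel_le ht0 ht1 hsum hA (by positivity) h using 4
  rw [div_pow, ← rpow_natCast (_ ^ _), ← rpow_mul hs.le]
  push_cast
  field_simp

lemma exists_abs_periodicHeatKernel_sub_indicator_le {Θ : Matrix (Fin n) (Fin n) ℝ} {C β N : ℝ}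
    (hC : 0 < C) (hN : 0 < N)
    (hdioph : ∀ q : Fin n → ℤ, q ∉ latticeZ Θ →
      C / √(sqnorm (intVec q)) ^ ((1 : ℝ) + β) ≤
        ⨅ k : Fin n → ℤ, √(sqnorm (Θ *ᵥ intVec q - (2 * π) • intVec k))) :
    ∃ K : ℝ, 0 ≤ K ∧ ∃ M : ℕ, ∀ t, 0 < t → t ≤ 1 → ∀ q : Fin n → ℤ,
      |periodicHeatKernel t (Θ *ᵥ intVec q) - (latticeZ Θ).indicator 1 q| ≤
        K * (1 + √(sqnorm (intVec q))) ^ M * t ^ N := by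
  obtain ⟨A, hA⟩ := exists_forall_tsum_gaussTerm_le (n := n) (by norm_num : (0 : ℝ) < 8)
  obtain ⟨K₁, hK₁0, hK₁⟩ := exists_exp_neg_div_sqrt_le_rpow (by positivity : 0 < C ^ 2 / 8) N
  obtain ⟨K₂, hK₂0, hK₂⟩ := exists_exp_neg_div_sqrt_le_rpow (by positivity : 0 < π ^ 2 / 2) N
  have hA0 : 0 ≤ A := (tsum_nonneg fun _ => gaussTerm_pos.le).trans (hA 0).2
  refine ⟨A * (K₁ + K₂ + 1), by positivity, ⌈2 * (2 * (1 + β)) * N⌉₊, fun t ht0 ht1 q => ?_⟩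
  obtain ⟨hsum, hAq⟩ := hA (Θ *ᵥ intVec q)
  set s := √(sqnorm (intVec q))
  set M := ⌈2 * (2 * (1 + β)) * N⌉₊
  have hs0 : 0 ≤ s := sqrt_nonneg _
  have hsM : 1 ≤ (1 + s) ^ M := one_le_pow₀ (by linarith)
  have htN : 0 < t ^ N := rpow_pos_of_pos ht0 N
  by_cases hq : q ∈ latticeZ Θ
  · rw [indicator_of_mem hq, Pi.one_apply]
    obtain ⟨m, hm⟩ := hq
    calc _ ≤ _ := abs_periodicHeatKernel_sub_one_le ht0 ht1 hsum hAq hm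
      _ ≤ K₂ * t ^ N * A := mul_le_mul_of_nonneg_right
          ((exp_neg_div_le_exp_neg_div_sqrt (by positivity) ht0 ht1).trans (hK₂ t ht0 ht1)) hA0
      _ ≤ A * (K₁ + K₂ + 1) * (1 + s) ^ M * t ^ N := by
          have hK : K₂ ≤ (K₁ + K₂ + 1) * (1 + s) ^ M := by nlinarith
          nlinarith [mul_le_mul_of_nonneg_right hK (mul_nonneg hA0 htN.le)]
  · have hq0 : q ≠ 0 := fun h => hq (h ▸ zero_mem_latticeZ Θ)
    have hs1 : 1 ≤ s := one_le_sqrt.2 (one_le_sqnorm_intVec hq0)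
    rw [indicator_of_notMem hq, sub_zero, abs_of_nonneg periodicHeatKernel_nonneg]
    calc _ ≤ _ := periodicHeatKernel_le_of_le_iInf hC hq0 ht0 ht1 hsum hAq (hdioph q hq)
      _ ≤ (K₁ + s ^ M) * t ^ N * A := mul_le_mul_of_nonneg_right
          (exp_neg_div_mul_rpow_le (by positivity) hN.le ht0 hs1 (Nat.le_ceil _) (hK₁ t ht0 ht1))
          hA0
      _ ≤ A * (K₁ + K₂ + 1) * (1 + s) ^ M * t ^ N := by
          have hK : K₁ + s ^ M ≤ (K₁ + K₂ + 1) * (1 + s) ^ M := by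
            nlinarith [pow_le_pow_left₀ hs0 (by linarith : s ≤ 1 + s) M]
          nlinarith [mul_le_mul_of_nonneg_right hK (mul_nonneg hA0 htN.le)]

lemma RapidDecay.mul_comp_neg {l r : (Fin n → ℤ) → ℂ} (hl : RapidDecay l) (hr : RapidDecay r) :
    RapidDecay (fun q => l q * r (-q)) := by
  intro m
  obtain ⟨cl, hcl⟩ := hl m
  obtain ⟨cr, hcr⟩ := hr 0
  refine ⟨cl * cr, fun q => ?_⟩
  have hr' : ‖r (-q)‖ ≤ cr := by simpa using hcr (-q)
  rw [norm_mul, mul_right_comm]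
  exact mul_le_mul (hcl q) hr' (norm_nonneg _) ((by positivity : (0 : ℝ) ≤ _).trans (hcl q))

lemma RapidDecay.exists_norm_mul_pow_le {a : (Fin n → ℤ) → ℂ} (ha : RapidDecay a) (M : ℕ) :
    ∃ c, ∀ q, ‖a q‖ * (1 + √(sqnorm (intVec q))) ^ M ≤
      c * ((1 + √(sqnorm (intVec q))) ^ (2 * n))⁻¹ := by
  obtain ⟨c, hc⟩ := ha (M + 2 * n)
  refine ⟨c, fun q => ?_⟩
  rw [← div_eq_mul_inv, le_div_iff₀ (by positivity), mul_assoc, ← pow_add]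
  exact hc q

lemma tsum_mul_cexp_neg_eq (z : ℂ) (t : ℝ) (y : Fin n → ℝ) :
    ∑' k : Fin n → ℤ, z * Complex.exp (-((sqnorm (y - (2 * π) • intVec k) / (4 * t) : ℝ) : ℂ)) =
      z * periodicHeatKernel t y := by
  simp_rw [← Complex.ofReal_neg, ← Complex.ofReal_exp]
  rw [tsum_mul_left, ← Complex.ofReal_tsum]
  rfl

end

lemma mul_eq_indicator_add_mul_sub_indicator {ι : Type*} (S : Set ι) (a : ι → ℂ) (x : ℝ) (i : ι) :
    a i * x = S.indicator a i + a i * ↑(x - S.indicator 1 i) := by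
  by_cases hi : i ∈ S
  · simp only [hi, indicator_of_mem, Pi.one_apply, Complex.ofReal_sub, Complex.ofReal_one]
    ring
  · simp [hi]

theorem stmt5_general (n : ℕ) (Θ : Matrix (Fin n) (Fin n) ℝ)
    (C β : ℝ) (hC : 0 < C)
    (hdioph : ∀ q : Fin n → ℤ, q ∉ latticeZ Θ →
      C / Real.sqrt (sqnorm (intVec q)) ^ ((1 : ℝ) + β) ≤
        ⨅ k : Fin n → ℤ,
          Real.sqrt (sqnorm (Θ.mulVec (intVec q) - (2 * π) • intVec k)))
    (l r : (Fin n → ℤ) → ℂ) (hl : RapidDecay l) (hr : RapidDecay r) :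
    ∀ N : ℝ, 0 < N → ∃ C' : ℝ, ∃ δ : ℝ, 0 < δ ∧ ∀ t : ℝ, 0 < t → t < δ →
      ‖(∑' q : Fin n → ℤ, ∑' k : Fin n → ℤ,
          l q * r (-q) *
            Complex.exp
              (-(((sqnorm (Θ.mulVec (intVec q) - (2 * π) • intVec k)
                  / (4 * t) : ℝ)) : ℂ))) -
        ∑' q : latticeZ Θ, l q * r (-(q : Fin n → ℤ))‖ ≤ C' * t ^ N := by
  intro N hN
  obtain ⟨K, hK0, M, hdev⟩ := exists_abs_periodicHeatKernel_sub_indicator_le hC hN hdioph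
  obtain ⟨c, hc⟩ := (hl.mul_comp_neg hr).exists_norm_mul_pow_le M
  set w : (Fin n → ℤ) → ℝ := fun q => ((1 + √(sqnorm (intVec q))) ^ (2 * n))⁻¹
  have hw : Summable w := summable_inv_one_add_sqrt_sqnorm_pow
  refine ⟨K * c * ∑' q, w q, 1, one_pos, fun t ht0 ht1 => ?_⟩
  set a : (Fin n → ℤ) → ℂ := fun q => l q * r (-q)
  set dev : (Fin n → ℤ) → ℝ :=
    fun q => periodicHeatKernel t (Θ *ᵥ intVec q) - (latticeZ Θ).indicator 1 q
  have hdev_le : ∀ q, ‖a q * dev q‖ ≤ K * c * t ^ N * w q := fun q => calc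
    ‖a q * dev q‖ = ‖a q‖ * |dev q| := by simp
    _ ≤ ‖a q‖ * (K * (1 + √(sqnorm (intVec q))) ^ M * t ^ N) := by grw [hdev t ht0 ht1.le q]
    _ = K * t ^ N * (‖a q‖ * (1 + √(sqnorm (intVec q))) ^ M) := by ring
    _ ≤ K * t ^ N * (c * w q) := by grw [hc q]
    _ = K * c * t ^ N * w q := by ring
  have ha : Summable ((latticeZ Θ).indicator a) := (hw.mul_left c).of_norm_bounded fun q =>
    calc _ ≤ ‖a q‖ := norm_indicator_le_norm_self a q
      _ ≤ ‖a q‖ * (1 + √(sqnorm (intVec q))) ^ M := le_mul_of_one_le_right (norm_nonneg _)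
          (one_le_pow₀ (le_add_of_nonneg_right (sqrt_nonneg _)))
      _ ≤ c * w q := hc q
  rw [tsum_congr fun q => (tsum_mul_cexp_neg_eq (a q) t _).trans
      (mul_eq_indicator_add_mul_sub_indicator (latticeZ Θ) a _ q),
    ha.tsum_add ((hw.mul_left _).of_norm_bounded hdev_le), ← tsum_subtype _ a,
    add_sub_cancel_left]
  calc _ ≤ K * c * t ^ N * ∑' q, w q := tsum_of_norm_bounded (hw.hasSum.mul_left _) hdev_le
    _ = _ := by ring

/-- If the skew-symmetric matrix `Θ` satisfies the Diophantine
condition `inf_{k∈ℤⁿ} |Θq − 2πk| ≥ C/|q|^{1+β}` on `𝒦^{inf}` (the `q` with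
`Θq ∉ 2πℤⁿ`), then for Schwartz sequences `l_q, r_q`,
`∑_{q,k} l_q r_{−q} e^{−|Θq−2πk|²/4t} = ∑_{q∈𝒵} l_q r_{−q} + O(t^N)` as
`t → 0⁺`, for every `N > 0`. -/
theorem stmt5 (n : ℕ) (Θ : Matrix (Fin n) (Fin n) ℝ) (hΘ : Θᵀ = -Θ)
    (C β : ℝ) (hC : 0 < C) (hβ : 0 ≤ β)
    (hdioph : ∀ q : Fin n → ℤ, q ∉ latticeZ Θ →
      C / Real.sqrt (sqnorm (intVec q)) ^ ((1 : ℝ) + β) ≤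
        ⨅ k : Fin n → ℤ,
          Real.sqrt (sqnorm (Θ.mulVec (intVec q) - (2 * π) • intVec k)))
    (l r : (Fin n → ℤ) → ℂ) (hl : RapidDecay l) (hr : RapidDecay r) :
    ∀ N : ℝ, 0 < N → ∃ C' : ℝ, ∃ δ : ℝ, 0 < δ ∧ ∀ t : ℝ, 0 < t → t < δ →
      ‖(∑' q : Fin n → ℤ, ∑' k : Fin n → ℤ,
          l q * r (-q) *
            Complex.exp
              (-(((sqnorm (Θ.mulVec (intVec q) - (2 * π) • intVec k)
                  / (4 * t) : ℝ)) : ℂ))) -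
        ∑' q : latticeZ Θ, l q * r (-(q : Fin n → ℤ))‖ ≤ C' * t ^ N :=
  stmt5_general n Θ C β hC hdioph l r hl hr
end

section
/- Let C, β > 0 and suppose d(q) ≥ C/q^{1+β} for all q ∈ ℕ. Let (a_q) be a sequence of rapid decay (for every m, |a_q| ≤ c_m q^{−m}). Then for every p > 0, t^{−p} ∑_{q≥1} |a_q| e^{−d(q)²/4t} → 0 as t → 0⁺. -/
open Real Filter Topology

/-- If `d(q) ≥ C/q^{1+β}` for all `q ∈ ℕ`, `q ≥ 1`, and `(a_q)` has
rapid decay, then for every `p > 0`,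
`t^{−p} ∑_{q≥1} |a_q| e^{−d(q)²/4t} → 0` as `t → 0⁺`. -/
theorem stmt6 (C β : ℝ) (hC : 0 < C) (hβ : 0 < β)
    (d : ℕ → ℝ)
    (hd : ∀ q : ℕ, 0 < q → C / (q : ℝ) ^ ((1 : ℝ) + β) ≤ d q)
    (a : ℕ → ℝ)
    (ha : ∀ m : ℕ, ∃ c : ℝ, ∀ q : ℕ, 0 < q → |a q| ≤ c / (q : ℝ) ^ m)
    (p : ℝ) (hp : 0 < p) :
    Tendsto (fun t : ℝ =>
        t ^ (-p) * ∑' q : ℕ, |a (q + 1)| * Real.exp (-(d (q + 1)) ^ 2 / (4 * t)))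
      (𝓝[>] 0) (𝓝 0) := by
  obtain ⟨N, hN⟩ : ∃ N : ℕ, p < N := exists_nat_gt p
  set r : ℝ := 2 * N * (1 + β) with hr
  have hr0 : 0 ≤ r := by positivity
  set m : ℕ := ⌈r⌉₊ + 2 with hm
  have hmr : r + 2 ≤ (m : ℝ) := by
    have := Nat.le_ceil r
    push_cast [hm]; linarith
  obtain ⟨c, hc⟩ := ha m
  have hc0 : 0 ≤ c := by
    have h1 := hc 1 one_pos
    simp at h1
    exact le_trans (abs_nonneg _) h1
  set K₀ : ℝ := c * N.factorial * 4 ^ N / C ^ (2 * N) with hK0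
  have hK00 : 0 ≤ K₀ := by positivity
  have hT : Summable (fun q : ℕ => ((q : ℝ) + 1) ^ (-2 : ℝ)) := by
    have h0 : Summable (fun q : ℕ => ((q : ℝ)) ^ (-2 : ℝ)) :=
      Real.summable_nat_rpow.mpr (by norm_num)
    have h2 := (summable_nat_add_iff 1).mpr h0
    apply h2.congr
    intro q
    push_cast
    ring_nf
  set T : ℝ := ∑' q : ℕ, ((q : ℝ) + 1) ^ (-2 : ℝ) with hTdef
  have hT0 : 0 ≤ T := tsum_nonneg fun q => by positivity
  -- pointwise bound
  have key : ∀ t : ℝ, 0 < t → ∀ q : ℕ,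
      |a (q + 1)| * Real.exp (-(d (q + 1)) ^ 2 / (4 * t))
        ≤ (K₀ * t ^ N) * ((q : ℝ) + 1) ^ (-2 : ℝ) := by
    intro t ht q
    set Q : ℝ := (q : ℝ) + 1 with hQ
    have hQ0 : (0 : ℝ) < Q := by positivity
    have hQ1 : (1 : ℝ) ≤ Q := by
      have : (0:ℝ) ≤ (q:ℝ) := Nat.cast_nonneg q
      linarith
    set u : ℝ := Q ^ ((1 : ℝ) + β) with hu
    have hu0 : 0 < u := Real.rpow_pos_of_pos hQ0 _
    have hDl : C / u ≤ d (q + 1) := by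
      have h := hd (q + 1) (Nat.succ_pos q)
      have : ((q + 1 : ℕ) : ℝ) = Q := by push_cast [hQ]; ring
      rwa [this] at h
    have hD0 : 0 < d (q + 1) := lt_of_lt_of_le (by positivity) hDl
    set x : ℝ := (d (q + 1)) ^ 2 / (4 * t) with hx
    have hx0 : 0 < x := by positivity
    have hxN : (0:ℝ) < x ^ N := by positivity
    have hf : (0:ℝ) < (N.factorial : ℝ) := by positivity
    have hexp : Real.exp (-(d (q + 1)) ^ 2 / (4 * t)) ≤ N.factorial / x ^ N := by
      have h1 : x ^ N ≤ Real.exp x * N.factorial :=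
        (div_le_iff₀ hf).mp (Real.pow_div_factorial_le_exp _ hx0.le N)
      have h2 : Real.exp (-(d (q+1)) ^ 2 / (4 * t)) = (Real.exp x)⁻¹ := by
        rw [← Real.exp_neg]; congr 1; rw [hx]; ring
      rw [h2, le_div_iff₀ hxN]
      calc (Real.exp x)⁻¹ * x ^ N ≤ (Real.exp x)⁻¹ * (Real.exp x * N.factorial) := by
            exact mul_le_mul_of_nonneg_left h1 (by positivity)
        _ = N.factorial := by field_simp
    -- lower bound for x
    set L : ℝ := C ^ 2 / (u ^ 2 * (4 * t)) with hL
    have hL0 : 0 < L := by positivity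
    have hLx : L ≤ x := by
      have hsq : (C / u) ^ 2 ≤ (d (q+1)) ^ 2 := by
        apply pow_le_pow_left₀ (by positivity) hDl
      rw [div_pow] at hsq
      have hCu : C ^ 2 ≤ d (q+1) ^ 2 * u ^ 2 := by
        rw [div_le_iff₀ (by positivity)] at hsq
        linarith
      rw [hL, hx, div_le_div_iff₀ (by positivity) (by positivity)]
      nlinarith [ht.le]
    have hLN : L ^ N ≤ x ^ N := pow_le_pow_left₀ hL0.le hLx N
    have hexp2 : (N.factorial : ℝ) / x ^ N ≤ N.factorial * (u ^ 2 * (4 * t)) ^ N / C ^ (2 * N) := by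
      have hLNeq : L ^ N = C ^ (2 * N) / (u ^ 2 * (4 * t)) ^ N := by
        rw [hL, div_pow, pow_mul]
      have h1 : (N.factorial : ℝ) / x ^ N ≤ N.factorial / L ^ N := by
        apply div_le_div_of_nonneg_left hf.le (by positivity) hLN
      refine h1.trans_eq ?_
      rw [hLNeq]
      field_simp
    have habs : |a (q + 1)| ≤ c / Q ^ m := by
      have h := hc (q + 1) (Nat.succ_pos q)
      have : ((q + 1 : ℕ) : ℝ) = Q := by push_cast [hQ]; ring
      rwa [this] at h
    have hmain : |a (q + 1)| * Real.exp (-(d (q + 1)) ^ 2 / (4 * t))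
        ≤ (c / Q ^ m) * (N.factorial * (u ^ 2 * (4 * t)) ^ N / C ^ (2 * N)) := by
      have := mul_le_mul habs (hexp.trans hexp2) (Real.exp_pos _).le
        (by positivity)
      exact this
    refine hmain.trans ?_
    have hstep : (c / Q ^ m) * ((N.factorial : ℝ) * (u ^ 2 * (4 * t)) ^ N / C ^ (2 * N))
        = (K₀ * t ^ N) * Q ^ (r - (m : ℝ)) := by
      have h4 : ((u ^ 2 * (4 * t)) ^ N : ℝ) = Q ^ r * (4 ^ N * t ^ N) := by
        rw [mul_pow, ← pow_mul, hu, ← Real.rpow_natCast (Q ^ ((1:ℝ) + β)) (2 * N),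
          ← Real.rpow_mul hQ0.le, mul_pow]
        have : ((1:ℝ) + β) * ((2 * N : ℕ) : ℝ) = r := by push_cast [hr]; ring
        rw [this]; try ring
      rw [h4, hK0, Real.rpow_sub hQ0, ← Real.rpow_natCast Q m]
      have hQr : (0:ℝ) < Q ^ r := Real.rpow_pos_of_pos hQ0 _
      have hQm : (0:ℝ) < Q ^ (m:ℝ) := Real.rpow_pos_of_pos hQ0 _
      field_simp
      try ring
    rw [hstep]
    exact mul_le_mul_of_nonneg_left
      (Real.rpow_le_rpow_of_exponent_le hQ1 (by linarith)) (by positivity)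
  -- summability and sum bound
  have hbound : ∀ t : ℝ, 0 < t →
      (fun t : ℝ => t ^ (-p) *
          ∑' q : ℕ, |a (q + 1)| * Real.exp (-(d (q + 1)) ^ 2 / (4 * t))) t
        ≤ (K₀ * T) * t ^ ((N : ℝ) - p) := by
    intro t ht
    have hg : Summable (fun q : ℕ => (K₀ * t ^ N) * ((q : ℝ) + 1) ^ (-2 : ℝ)) :=
      hT.mul_left _
    have hS : Summable (fun q : ℕ => |a (q + 1)| * Real.exp (-(d (q + 1)) ^ 2 / (4 * t))) :=
      Summable.of_nonneg_of_le (fun q => by positivity) (key t ht) hg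
    have h1 : (∑' q : ℕ, |a (q + 1)| * Real.exp (-(d (q + 1)) ^ 2 / (4 * t)))
        ≤ (K₀ * t ^ N) * T := by
      rw [hTdef, ← tsum_mul_left]
      exact Summable.tsum_le_tsum (key t ht) hS hg
    have htp : (0:ℝ) < t ^ (-p) := Real.rpow_pos_of_pos ht _
    calc t ^ (-p) * ∑' q : ℕ, |a (q + 1)| * Real.exp (-(d (q + 1)) ^ 2 / (4 * t))
        ≤ t ^ (-p) * ((K₀ * t ^ N) * T) := by
          exact mul_le_mul_of_nonneg_left h1 htp.le
      _ = (K₀ * T) * (t ^ (-p) * t ^ ((N:ℕ) : ℝ)) := by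
          rw [Real.rpow_natCast]; ring
      _ = (K₀ * T) * t ^ ((N : ℝ) - p) := by
          rw [← Real.rpow_add ht]; ring_nf
  -- squeeze
  have hgt : Tendsto (fun t : ℝ => (K₀ * T) * t ^ ((N : ℝ) - p)) (𝓝[>] 0) (𝓝 0) := by
    have hNp : (0:ℝ) < (N : ℝ) - p := by linarith
    have hca : ContinuousAt (fun t : ℝ => t ^ ((N : ℝ) - p)) 0 :=
      Real.continuousAt_rpow_const 0 _ (Or.inr hNp.le)
    have h0 : (0:ℝ) ^ ((N : ℝ) - p) = 0 := Real.zero_rpow hNp.ne'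
    have htt : Tendsto (fun t : ℝ => t ^ ((N:ℝ) - p)) (𝓝[>] (0:ℝ)) (𝓝 0) := by
      have h1 := hca.tendsto
      rw [h0] at h1
      exact h1.mono_left nhdsWithin_le_nhds
    have h2 := htt.const_mul (K₀ * T)
    rw [mul_zero] at h2
    exact h2
  apply squeeze_zero' ?_ ?_ hgt
  · filter_upwards [self_mem_nhdsWithin] with t ht
    have ht' : (0:ℝ) < t := ht
    have : (0:ℝ) ≤ ∑' q : ℕ, |a (q + 1)| * Real.exp (-(d (q + 1)) ^ 2 / (4 * t)) :=
      tsum_nonneg fun q => by positivity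
    have htp : (0:ℝ) ≤ t ^ (-p) := (Real.rpow_pos_of_pos ht' _).le
    exact mul_nonneg htp this
  · filter_upwards [self_mem_nhdsWithin] with t ht
    exact hbound t ht
end

section
/- Upper bound in Example 1: let c₈ > 1, 0 < c₉ < 1, α > 0, and suppose d(q) ≥ c₉ e^{−c₈ q} for all but finitely many q ∈ ℕ with d(q) > 0. Then T(t) := (2πt)^{−1} ∑_{q≥1} e^{−αq} e^{−d(q)²/4t} satisfies T(t) ≤ (2πc₈)^{−1} Γ(α/(2c₈)) c₉^{−α/c₈} t^{−1+α/(2c₈)} + O(t^∞) as t → 0⁺, up to a constant factor. -/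
/-!
Put `A = c₉² / (4t)` and `L = log A / (2c₈)`. Once `d q ≥ c₉ e^{-c₈ q}`, the `q`-th term is at most
`e^{-αq} exp(-A e^{-2c₈ q}) = A^{-α/(2c₈)} φ(L - q)` with `φ u = e^{αu} exp(-e^{2c₈ u})`.
Since `φ` decays exponentially on both sides, `∑ₙ φ(L - n)` is bounded uniformly in the shift `L`,
so these terms contribute `O(t^{α/(2c₈)})`. Each of the finitely many remaining terms is
`O(e^{-c/t}) = O(t^N)` for every `N`.
-/

open Real

lemma exp_neg_le_factorial_div_pow {x : ℝ} (hx : 0 < x) (n : ℕ) :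
    exp (-x) ≤ n.factorial / x ^ n := by
  rw [exp_neg, inv_le_comm₀ (exp_pos x) (by positivity), inv_div]
  exact pow_div_factorial_le_exp _ hx.le n

lemma Summable.tsum_le_of_le_comp_injective {ι κ : Type*} {f : ι → ℝ} {g : κ → ℝ}
    (hg : Summable g) (hg0 : ∀ k, 0 ≤ g k) (hf0 : ∀ i, 0 ≤ f i) {e : ι → κ}
    (he : Function.Injective e) (hfg : ∀ i, f i ≤ g (e i)) :
    Summable f ∧ ∑' i, f i ≤ ∑' k, g k := by
  have hge : Summable (g ∘ e) := hg.comp_injective he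
  have hf := hge.of_nonneg_of_le hf0 hfg
  exact ⟨hf, (hf.tsum_le_tsum hfg hge).trans (tsum_comp_le_tsum_of_inj hg hg0 he)⟩

lemma summable_exp_neg_mul_abs_intCast {c : ℝ} (hc : 0 < c) :
    Summable fun m : ℤ => exp (-c * |(m : ℝ)|) := by
  have hgeom : Summable fun n : ℕ => exp (-c * n) := by
    simpa only [mul_comm (-c), exp_nat_mul] using
      summable_geometric_of_lt_one (exp_pos _).le (exp_lt_one_iff.mpr (neg_lt_zero.mpr hc))
  exact .of_nat_of_neg (by simpa using hgeom) (by simpa using hgeom)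

lemma exp_neg_mul_abs_sub_le {c : ℝ} (hc : 0 < c) (x : ℝ) (n : ℤ) :
    exp (-c * |x - n|) ≤ exp c * exp (-c * |((n - ⌊x⌋ : ℤ) : ℝ)|) := by
  have hfract : |x - ⌊x⌋| ≤ 1 := by
    rw [Int.self_sub_floor, abs_of_nonneg (Int.fract_nonneg x)]
    exact (Int.fract_lt_one x).le
  have hdist : |((n - ⌊x⌋ : ℤ) : ℝ)| ≤ |x - n| + 1 := by
    push_cast
    calc |(n : ℝ) - ⌊x⌋| = |(x - ⌊x⌋) - (x - n)| := by ring_nf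
      _ ≤ |x - ⌊x⌋| + |x - n| := abs_sub _ _
      _ ≤ |x - n| + 1 := by linarith
  rw [← exp_add, exp_le_exp]
  nlinarith

lemma tsum_exp_neg_mul_abs_sub_natCast_le {c : ℝ} (hc : 0 < c) (x : ℝ) :
    Summable (fun n : ℕ => exp (-c * |x - n|)) ∧
      ∑' n : ℕ, exp (-c * |x - n|) ≤ exp c * ∑' m : ℤ, exp (-c * |(m : ℝ)|) := by
  have hinj : Function.Injective fun n : ℕ => (n : ℤ) - ⌊x⌋ :=
    (Equiv.subRight ⌊x⌋).injective.comp Nat.cast_injective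
  rw [← tsum_mul_left]
  exact ((summable_exp_neg_mul_abs_intCast hc).mul_left _).tsum_le_of_le_comp_injective
    (fun _ => by positivity) (fun _ => by positivity) hinj
    fun n => by simpa using exp_neg_mul_abs_sub_le hc x n

lemma exp_mul_mul_exp_neg_exp_le {α β : ℝ} (hα : 0 < α) (hβ : 0 < β) :
    ∃ M c : ℝ, 0 < M ∧ 0 < c ∧ ∀ u : ℝ, exp (α * u) * exp (-exp (β * u)) ≤ M * exp (-c * |u|) := by
  obtain ⟨k, hk⟩ := exists_nat_gt (α / β)
  have hkβ : α < k * β := (div_lt_iff₀ hβ).mp hk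
  refine ⟨k.factorial, min α (k * β - α), by positivity, lt_min hα (by linarith), fun u => ?_⟩
  have hfact : (1 : ℝ) ≤ k.factorial := by exact_mod_cast k.factorial_pos
  rcases le_total u 0 with hu | hu
  · calc exp (α * u) * exp (-exp (β * u)) ≤ exp (α * u) * 1 := by gcongr; simp; positivity
      _ ≤ 1 * exp (-min α (k * β - α) * |u|) := by
        rw [abs_of_nonpos hu, mul_one, one_mul, exp_le_exp]
        nlinarith [min_le_left α (k * β - α)]
      _ ≤ _ := by gcongr
  · calc exp (α * u) * exp (-exp (β * u)) ≤ exp (α * u) * (k.factorial / exp (β * u) ^ k) := by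
          gcongr; exact exp_neg_le_factorial_div_pow (exp_pos _) k
      _ = k.factorial * exp (-(k * β - α) * u) := by
        rw [← exp_nat_mul, div_eq_mul_inv, ← exp_neg, mul_left_comm, ← exp_add]; ring_nf
      _ ≤ _ := by
        rw [abs_of_nonneg hu]
        gcongr
        exact min_le_right _ _

lemma exp_neg_mul_mul_exp_neg_eq {α β A : ℝ} (hβ : 0 < β) (hA : 0 < A) (x : ℝ) :
    exp (-α * x) * exp (-(A * exp (-β * x))) =
      A ^ (-(α / β)) * (exp (α * (log A / β - x)) * exp (-exp (β * (log A / β - x)))) := by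
  have hL : β * (log A / β) = log A := mul_div_cancel₀ _ hβ.ne'
  have h1 : A * exp (-β * x) = exp (β * (log A / β - x)) := by
    rw [mul_sub, hL, exp_sub, exp_log hA, div_eq_mul_inv, ← exp_neg, neg_mul]
  have h2 : exp (-α * x) = A ^ (-(α / β)) * exp (α * (log A / β - x)) := by
    rw [rpow_def_of_pos hA, ← exp_add]
    congr 1
    field_simp
    ring
  rw [h1, h2, mul_assoc]

lemma tsum_exp_neg_mul_mul_exp_neg_le {α β : ℝ} (hα : 0 < α) (hβ : 0 < β) :
    ∃ C : ℝ, 0 < C ∧ ∀ A : ℝ, 0 < A →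
      Summable (fun n : ℕ => exp (-α * n) * exp (-(A * exp (-β * n)))) ∧
      ∑' n : ℕ, exp (-α * n) * exp (-(A * exp (-β * n))) ≤ C * A ^ (-(α / β)) := by
  obtain ⟨M, c, hM, hc, hφ⟩ := exp_mul_mul_exp_neg_exp_le hα hβ
  have hB : 0 < ∑' m : ℤ, exp (-c * |(m : ℝ)|) :=
    (summable_exp_neg_mul_abs_intCast hc).tsum_pos (fun _ => (exp_pos _).le) 0 (exp_pos _)
  refine ⟨M * (exp c * ∑' m : ℤ, exp (-c * |(m : ℝ)|)), by positivity, fun A hA => ?_⟩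
  obtain ⟨hsum, hle⟩ := tsum_exp_neg_mul_abs_sub_natCast_le hc (log A / β)
  have hterm : ∀ n : ℕ, exp (-α * n) * exp (-(A * exp (-β * n))) ≤
      A ^ (-(α / β)) * M * exp (-c * |log A / β - n|) := fun n => by
    rw [exp_neg_mul_mul_exp_neg_eq hβ hA, mul_assoc]
    exact mul_le_mul_of_nonneg_left (hφ _) (by positivity)
  have hmaj := hsum.mul_left (A ^ (-(α / β)) * M)
  have hsumm := hmaj.of_nonneg_of_le (fun _ => by positivity) hterm
  refine ⟨hsumm, (hsumm.tsum_le_tsum hterm hmaj).trans ?_⟩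
  rw [tsum_mul_left]
  calc A ^ (-(α / β)) * M * ∑' n : ℕ, exp (-c * |log A / β - n|)
      ≤ A ^ (-(α / β)) * M * (exp c * ∑' m : ℤ, exp (-c * |(m : ℝ)|)) := by gcongr
    _ = _ := by ring

lemma exp_neg_sq_div_le_of_le {c₈ c₉ t x y : ℝ} (ht : 0 < t) (h9 : 0 ≤ c₉)
    (h : c₉ * exp (-c₈ * x) ≤ y) :
    exp (-y ^ 2 / (4 * t)) ≤ exp (-(c₉ ^ 2 / (4 * t) * exp (-(2 * c₈) * x))) := by
  have hsq : c₉ ^ 2 / (4 * t) * exp (-(2 * c₈) * x) = (c₉ * exp (-c₈ * x)) ^ 2 / (4 * t) := by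
    rw [mul_pow, ← exp_nat_mul]; ring_nf
  rw [exp_le_exp, neg_div, neg_le_neg_iff, hsq]
  gcongr

lemma tsum_exp_mul_exp_neg_sq_div_nat_add_le {c₈ c₉ α t : ℝ} {d : ℕ → ℝ} {Q₀ : ℕ} (ht : 0 < t)
    (h9 : 0 ≤ c₉) (hd : ∀ q : ℕ, Q₀ ≤ q → c₉ * exp (-c₈ * q) ≤ d q)
    (hG : Summable fun n : ℕ => exp (-α * n) * exp (-(c₉ ^ 2 / (4 * t) * exp (-(2 * c₈) * n)))) :
    Summable (fun q : ℕ => exp (-α * ((q + Q₀ : ℕ) + 1)) * exp (-(d (q + Q₀ + 1)) ^ 2 / (4 * t))) ∧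
      ∑' q : ℕ, exp (-α * ((q + Q₀ : ℕ) + 1)) * exp (-(d (q + Q₀ + 1)) ^ 2 / (4 * t)) ≤
        ∑' n : ℕ, exp (-α * n) * exp (-(c₉ ^ 2 / (4 * t) * exp (-(2 * c₈) * n))) := by
  refine hG.tsum_le_of_le_comp_injective (fun _ => by positivity) (fun _ => by positivity)
    (e := fun q => q + Q₀ + 1) (fun a b h => by simpa using h) fun q => ?_
  rw [← Nat.cast_succ]
  exact mul_le_mul_of_nonneg_left
    (exp_neg_sq_div_le_of_le ht h9 (hd (q + Q₀ + 1) (by omega))) (exp_pos _).le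

lemma inv_mul_exp_neg_div_le {a t : ℝ} (ha : 0 < a) (ht : 0 < t) (n : ℕ) :
    t⁻¹ * exp (-(a / t)) ≤ (n + 1).factorial / a ^ (n + 1) * t ^ n := by
  calc t⁻¹ * exp (-(a / t)) ≤ t⁻¹ * ((n + 1).factorial / (a / t) ^ (n + 1)) := by
        gcongr; exact exp_neg_le_factorial_div_pow (by positivity) _
    _ = _ := by rw [div_pow, pow_succ t]; field_simp

lemma inv_mul_exp_mul_exp_neg_sq_div_le {a t u y : ℝ} (ha : 0 ≤ a) (ht : 0 < t) (hu : u ≤ 0)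
    (hy : 0 < y) (N : ℕ) :
    (a * t)⁻¹ * (exp u * exp (-y ^ 2 / (4 * t))) ≤
      a⁻¹ * ((N + 1).factorial / (y ^ 2 / 4) ^ (N + 1)) * t ^ N := by
  calc (a * t)⁻¹ * (exp u * exp (-y ^ 2 / (4 * t)))
      = a⁻¹ * exp u * (t⁻¹ * exp (-(y ^ 2 / 4 / t))) := by
        rw [mul_inv, div_div, neg_div]; ring
    _ ≤ a⁻¹ * 1 * ((N + 1).factorial / (y ^ 2 / 4) ^ (N + 1) * t ^ N) := by
        have hy4 : 0 < y ^ 2 / 4 := by positivity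
        exact mul_le_mul (by gcongr; exact exp_le_one_iff.mpr hu)
          (inv_mul_exp_neg_div_le hy4 ht N) (by positivity) (by positivity)
    _ = _ := by ring

theorem stmt17_general (c₈ c₉ α : ℝ) (h8 : 1 < c₈) (h9 : 0 < c₉)
    (hα : 0 < α) (d : ℕ → ℝ) (hdpos : ∀ q, 0 < d q)
    (hd : ∃ Q₀ : ℕ, ∀ q : ℕ, Q₀ ≤ q → c₉ * Real.exp (-c₈ * q) ≤ d q) :
    ∃ K : ℝ, 0 < K ∧ ∀ N : ℕ, ∃ C' δ : ℝ, 0 < δ ∧ ∀ t : ℝ, 0 < t → t < δ →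
      (2 * π * t)⁻¹ *
          ∑' q : ℕ, Real.exp (-α * (q + 1)) * Real.exp (-(d (q + 1)) ^ 2 / (4 * t))
        ≤ K * ((2 * π * c₈)⁻¹ * Real.Gamma (α / (2 * c₈)) * c₉ ^ (-α / c₈)) *
            t ^ (-1 + α / (2 * c₈)) + C' * t ^ (N : ℝ) := by
  obtain ⟨Q₀, hQ₀⟩ := hd
  obtain ⟨C, hC, hG⟩ := tsum_exp_neg_mul_mul_exp_neg_le hα (by positivity : 0 < 2 * c₈)
  set s := α / (2 * c₈)
  set E := (2 * π * c₈)⁻¹ * Gamma s * c₉ ^ (-α / c₈)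
  have hE : 0 < E := by
    have := Gamma_pos_of_pos (show 0 < s by positivity)
    have := rpow_pos_of_pos h9 (-α / c₈)
    positivity
  refine ⟨C * (4 / c₉ ^ 2) ^ s / (2 * π) / E, by positivity, fun N => ⟨∑ q ∈ Finset.range Q₀,
    (2 * π)⁻¹ * ((N + 1).factorial / (d (q + 1) ^ 2 / 4) ^ (N + 1)), 1, one_pos, fun t ht _ => ?_⟩⟩
  set F : ℕ → ℝ := fun q => exp (-α * (q + 1)) * exp (-(d (q + 1)) ^ 2 / (4 * t))
  set A := c₉ ^ 2 / (4 * t)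
  obtain ⟨hGsum, hGle⟩ := hG A (by positivity)
  obtain ⟨hTsum, hTle⟩ := tsum_exp_mul_exp_neg_sq_div_nat_add_le ht h9.le hQ₀ hGsum
  have hAs : A ^ (-s) = (4 / c₉ ^ 2) ^ s * t ^ s := by
    rw [rpow_neg (by positivity), ← inv_rpow (by positivity), ← mul_rpow (by positivity) ht.le]
    simp only [A]
    field_simp
  rw [← ((summable_nat_add_iff (f := F) Q₀).mp hTsum).sum_add_tsum_nat_add Q₀, mul_add, add_comm]
  gcongr ?_ + ?_
  · calc _ ≤ (2 * π * t)⁻¹ * (C * A ^ (-s)) := by gcongr; exact hTle.trans hGle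
      _ = _ := by rw [hAs, rpow_add ht, rpow_neg_one]; field_simp
  · rw [rpow_natCast, Finset.mul_sum, Finset.sum_mul]
    exact Finset.sum_le_sum fun q _ => inv_mul_exp_mul_exp_neg_sq_div_le (by positivity) ht
      (by nlinarith [q.cast_nonneg (α := ℝ)]) (hdpos _) N

/-- Upper bound in Example 1: with `c₈ > 1`, `0 < c₉ < 1`,
`α > 0`, and `d(q) ≥ c₉ e^{−c₈ q}` for all but finitely many `q`, `d(q) > 0`,
the function `T(t) = (2πt)^{−1} ∑_{q≥1} e^{−αq} e^{−d(q)²/4t}` satisfies, up to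
a constant factor `K` and exponentially small terms (here `O(t^N)` for every
`N`), `T(t) ≤ K (2πc₈)^{−1} Γ(α/(2c₈)) c₉^{−α/c₈} t^{−1+α/(2c₈)}`. -/
theorem stmt17 (c₈ c₉ α : ℝ) (h8 : 1 < c₈) (h9 : 0 < c₉) (h9' : c₉ < 1)
    (hα : 0 < α) (d : ℕ → ℝ) (hdpos : ∀ q, 0 < d q)
    (hd : ∃ Q₀ : ℕ, ∀ q : ℕ, Q₀ ≤ q → c₉ * Real.exp (-c₈ * q) ≤ d q) :
    ∃ K : ℝ, 0 < K ∧ ∀ N : ℕ, ∃ C' δ : ℝ, 0 < δ ∧ ∀ t : ℝ, 0 < t → t < δ →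
      (2 * π * t)⁻¹ *
          ∑' q : ℕ, Real.exp (-α * (q + 1)) * Real.exp (-(d (q + 1)) ^ 2 / (4 * t))
        ≤ K * ((2 * π * c₈)⁻¹ * Real.Gamma (α / (2 * c₈)) * c₉ ^ (-α / c₈)) *
            t ^ (-1 + α / (2 * c₈)) + C' * t ^ (N : ℝ) :=
  stmt17_general c₈ c₉ α h8 h9 hα d hdpos hd
end
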